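/- arXiv:1311.2299 — 4 statements merged into one kernel-verified Lean document; each statement's English description precedes it below -/
import Mathlib

section
/- Let d ≥ 3 and ℓ ≥ 1. For any two rainbow edge colorings c₁, c₂ (with colors in a common set) of two disjoint complete d-ary trees with ℓ levels, the number m(c₁,c₂) of pairs of leaves whose combined root-to-leaf paths are rainbow satisfies m(c₁,c₂) ≥ d^{2ℓ}/4. -/
/-- An edge of the complete `d`-ary tree with `ℓ` levels: a nonempty sequence over `Fin d`
of length at most `ℓ`, indexing the vertex that the edge joins to its parent. -/
def TreeEdge (d ℓ : ℕ) : Type := {s : List (Fin d) // s ≠ [] ∧ s.length ≤ ℓ}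

/-- A leaf of the complete `d`-ary tree with `ℓ` levels: a sequence of length `ℓ`. -/
def TreeLeaf (d ℓ : ℕ) : Type := {s : List (Fin d) // s.length = ℓ}

/-- The root-to-leaf path `P(v)`: the set of (edges indexed by) nonempty prefixes of `v`. -/
def leafPath {d ℓ : ℕ} (v : TreeLeaf d ℓ) : Set (TreeEdge d ℓ) := {e | e.1 <+: v.1}

/-- The set of pairs of leaves `(v, w)` such that the combined path `P(v) ∪ P(w)` is
rainbow: `c₁` is injective on `P(v)`, `c₂` is injective on `P(w)`, and the color sets
`c₁(P(v))` and `c₂(P(w))` are disjoint. -/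
def rainbowPairs {C : Type*} {d ℓ : ℕ} (c₁ c₂ : TreeEdge d ℓ → C) :
    Set (TreeLeaf d ℓ × TreeLeaf d ℓ) :=
  {p | Set.InjOn c₁ (leafPath p.1) ∧ Set.InjOn c₂ (leafPath p.2) ∧
    Disjoint (c₁ '' leafPath p.1) (c₂ '' leafPath p.2)}

/-- `m(c₁,c₂)`: the number of pairs of leaves whose combined root-to-leaf paths are rainbow. -/
noncomputable def mPairs {C : Type*} {d ℓ : ℕ} (c₁ c₂ : TreeEdge d ℓ → C) : ℕ :=
  Nat.card (rainbowPairs c₁ c₂)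

instance {d ℓ : ℕ} : DecidableEq (TreeEdge d ℓ) :=
  inferInstanceAs (DecidableEq {s : List (Fin d) // s ≠ [] ∧ s.length ≤ ℓ})
instance {d ℓ : ℕ} : DecidableEq (TreeLeaf d ℓ) :=
  inferInstanceAs (DecidableEq {s : List (Fin d) // s.length = ℓ})
instance {d ℓ : ℕ} : Fintype (TreeLeaf d ℓ) :=
  inferInstanceAs (Fintype (List.Vector (Fin d) ℓ))

noncomputable instance {d ℓ : ℕ} : Fintype (TreeEdge d ℓ) :=
  Fintype.ofInjective (β := List.Vector (Option (Fin d)) ℓ)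
    (fun e : TreeEdge d ℓ =>
      ⟨e.1.map some ++ List.replicate (ℓ - e.1.length) none, by
        simp only [List.length_append, List.length_map, List.length_replicate]
        have := e.2.2; omega⟩)
    (by
      intro a b h
      have h' := congrArg (fun v : List.Vector (Option (Fin d)) ℓ => v.1.filterMap id) h
      simp only [List.filterMap_append, List.filterMap_replicate] at h'
      apply Subtype.ext
      simpa [List.filterMap_map, List.filterMap_some] using h')

theorem card_leaf (d ℓ : ℕ) : Fintype.card (TreeLeaf d ℓ) = d ^ ℓ := by
  have e : TreeLeaf d ℓ ≃ List.Vector (Fin d) ℓ :=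
    ⟨fun x => x, fun x => x, fun _ => rfl, fun _ => rfl⟩
  calc Fintype.card (TreeLeaf d ℓ) = Fintype.card (List.Vector (Fin d) ℓ) :=
        Fintype.card_congr e
    _ = d ^ ℓ := by rw [card_vector, Fintype.card_fin]

theorem card_prefix_leaf {d ℓ : ℕ} (s : List (Fin d)) (hs : s.length ≤ ℓ) :
    Fintype.card {v : TreeLeaf d ℓ // s <+: v.1} = d ^ (ℓ - s.length) := by
  classical
  have e : {v : TreeLeaf d ℓ // s <+: v.1} ≃ List.Vector (Fin d) (ℓ - s.length) :=
    { toFun := fun v => ⟨v.1.1.drop s.length, by rw [List.length_drop, v.1.2]⟩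
      invFun := fun t => ⟨⟨s ++ t.1, by rw [List.length_append, t.2]; omega⟩,
        List.prefix_append _ _⟩
      left_inv := by
        rintro ⟨⟨v, hv⟩, hpre⟩
        apply Subtype.ext; apply Subtype.ext
        obtain ⟨t, ht⟩ := hpre
        replace ht : s ++ t = v := ht
        show s ++ List.drop s.length v = v
        rw [← ht, List.drop_left]
      right_inv := by
        rintro ⟨t, ht⟩
        apply Subtype.ext
        simp [List.drop_left] }
  calc Fintype.card {v : TreeLeaf d ℓ // s <+: v.1}
      = Fintype.card (List.Vector (Fin d) (ℓ - s.length)) := Fintype.card_congr e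
    _ = d ^ (ℓ - s.length) := by rw [card_vector, Fintype.card_fin]

theorem card_edge_len {d ℓ : ℕ} (i : ℕ) (h1 : 1 ≤ i) (h2 : i ≤ ℓ) :
    Fintype.card {e : TreeEdge d ℓ // e.1.length = i} = d ^ i := by
  have e : {e : TreeEdge d ℓ // e.1.length = i} ≃ List.Vector (Fin d) i :=
    { toFun := fun e => ⟨e.1.1, e.2⟩
      invFun := fun t => ⟨⟨t.1, ⟨fun h => by have h3 := t.2; rw [h] at h3; simp at h3; omega, by rw [t.2]; exact h2⟩⟩, t.2⟩
      left_inv := fun e => by apply Subtype.ext; apply Subtype.ext; rfl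
      right_inv := fun t => by apply Subtype.ext; rfl }
  calc Fintype.card {e : TreeEdge d ℓ // e.1.length = i}
      = Fintype.card (List.Vector (Fin d) i) := Fintype.card_congr e
    _ = d ^ i := by rw [card_vector, Fintype.card_fin]

theorem geom_bound {d : ℕ} (hd : 3 ≤ d) : ∀ n : ℕ,
    2 * (∑ i ∈ Finset.Icc 1 n, d ^ i * d ^ (2 * (n - i))) + d ^ n ≤ d ^ (2 * n)
  | 0 => by simp
  | (n+1) => by
    have ih := geom_bound hd n
    have hsum : (∑ i ∈ Finset.Icc 1 (n+1), d ^ i * d ^ (2 * (n + 1 - i)))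
        = d ^ 2 * (∑ i ∈ Finset.Icc 1 n, d ^ i * d ^ (2 * (n - i))) + d ^ (n+1) := by
      rw [Finset.sum_Icc_succ_top (by omega)]
      rw [Finset.mul_sum]
      congr 1
      · refine Finset.sum_congr rfl fun i hi => ?_
        have hi' := Finset.mem_Icc.mp hi
        have : 2 * (n + 1 - i) = 2 * (n - i) + 2 := by omega
        rw [this, pow_add]
        ring
      · simp
    rw [hsum]
    have h1 : d ^ 2 * (2 * (∑ i ∈ Finset.Icc 1 n, d ^ i * d ^ (2 * (n - i))) + d ^ n)
        ≤ d ^ 2 * d ^ (2 * n) := Nat.mul_le_mul_left _ ih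
    have h2 : 3 * (d * d ^ n) ≤ d * (d * d ^ n) :=
      Nat.mul_le_mul_right _ hd
    have e1 : d ^ (2 * (n+1)) = d ^ 2 * d ^ (2 * n) := by rw [← pow_add]; ring_nf
    have e2 : d ^ (n + 1) = d * d ^ n := by rw [pow_succ]; ring
    have e3 : d ^ 2 = d * d := by ring
    rw [e1, e2]
    nlinarith [h1, h2]


/-- for `d ≥ 3`, `ℓ ≥ 1` and rainbow colorings `c₁, c₂` of two disjoint
complete `d`-ary trees with `ℓ` levels, `m(c₁,c₂) ≥ d^(2ℓ)/4`. -/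
theorem stmt_0 (d ℓ : ℕ) (hd : 3 ≤ d) (hℓ : 1 ≤ ℓ) {C : Type*}
    (c₁ c₂ : TreeEdge d ℓ → C)
    (h₁ : Function.Injective c₁) (h₂ : Function.Injective c₂) :
    (mPairs c₁ c₂ : ℝ) ≥ (d : ℝ) ^ (2 * ℓ) / 4 := by
  classical
  set B : Finset (TreeLeaf d ℓ × TreeLeaf d ℓ) :=
    Finset.univ.filter (fun p => ∃ e f : TreeEdge d ℓ,
      c₁ e = c₂ f ∧ e.1 <+: p.1.1 ∧ f.1 <+: p.2.1) with hB
  set M : Finset (TreeEdge d ℓ × TreeEdge d ℓ) :=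
    Finset.univ.filter (fun q => c₁ q.1 = c₂ q.2) with hM
  set S : ℕ := ∑ e : TreeEdge d ℓ, (d ^ (ℓ - e.1.length)) ^ 2 with hSdef
  -- mPairs = d^(2ℓ) - B.card
  have hset : rainbowPairs c₁ c₂ = (↑Bᶜ : Set (TreeLeaf d ℓ × TreeLeaf d ℓ)) := by
    ext p
    simp only [hB, Finset.coe_compl, Set.mem_compl_iff, Finset.mem_coe, Finset.mem_filter,
      Finset.mem_univ, true_and, rainbowPairs, Set.mem_setOf_eq]
    constructor
    · rintro ⟨-, -, hdisj⟩ ⟨e, f, hef, he, hf⟩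
      exact Set.disjoint_left.mp hdisj ⟨e, he, rfl⟩ ⟨f, hf, hef.symm⟩
    · intro h
      refine ⟨h₁.injOn, h₂.injOn, ?_⟩
      rw [Set.disjoint_left]
      rintro x ⟨e, he, rfl⟩ ⟨f, hf, hfx⟩
      exact h ⟨e, f, hfx.symm, he, hf⟩
  have hmp : mPairs c₁ c₂ = d ^ (2 * ℓ) - B.card := by
    rw [mPairs, hset, Nat.card_coe_set_eq, Set.ncard_coe_finset, Finset.card_compl,
      Fintype.card_prod, card_leaf, ← pow_add, two_mul ℓ]
  -- B covered by matched-pair rectangles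
  have hBcard : B.card ≤ ∑ q ∈ M, d ^ (ℓ - q.1.1.length) * d ^ (ℓ - q.2.1.length) := by
    have hsub : B ⊆ M.biUnion (fun q =>
        Finset.univ.filter fun p : TreeLeaf d ℓ × TreeLeaf d ℓ =>
          q.1.1 <+: p.1.1 ∧ q.2.1 <+: p.2.1) := by
      intro p hp
      rw [hB, Finset.mem_filter] at hp
      obtain ⟨-, e, f, hef, he, hf⟩ := hp
      rw [Finset.mem_biUnion]
      exact ⟨(e, f), by simp [hM, hef], by simp [he, hf]⟩
    refine (Finset.card_le_card hsub).trans ((Finset.card_biUnion_le).trans ?_)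
    refine Finset.sum_le_sum fun q hq => ?_
    have : (Finset.univ.filter fun p : TreeLeaf d ℓ × TreeLeaf d ℓ =>
        q.1.1 <+: p.1.1 ∧ q.2.1 <+: p.2.1)
        = (Finset.univ.filter fun v : TreeLeaf d ℓ => q.1.1 <+: v.1) ×ˢ
          (Finset.univ.filter fun w : TreeLeaf d ℓ => q.2.1 <+: w.1) := by
      ext p
      simp only [Finset.mem_filter, Finset.mem_product, Finset.mem_univ, true_and]
    rw [this, Finset.card_product]
    have c1 : (Finset.univ.filter fun v : TreeLeaf d ℓ => q.1.1 <+: v.1).card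
        = d ^ (ℓ - q.1.1.length) := by
      rw [← Fintype.card_subtype, card_prefix_leaf _ q.1.2.2]
    have c2 : (Finset.univ.filter fun w : TreeLeaf d ℓ => q.2.1 <+: w.1).card
        = d ^ (ℓ - q.2.1.length) := by
      rw [← Fintype.card_subtype, card_prefix_leaf _ q.2.2.2]
    rw [c1, c2]
  -- AM-GM and injectivity of projections
  have hsq : ∀ x y : ℕ, 2 * (x * y) ≤ x ^ 2 + y ^ 2 := by
    intro x y
    nlinarith [sq_nonneg ((x : ℤ) - y), sq_nonneg ((x : ℤ) + y)]
  have hproj1 : ∑ q ∈ M, (d ^ (ℓ - q.1.1.length)) ^ 2 ≤ S := by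
    have hinj : Set.InjOn Prod.fst (M : Set (TreeEdge d ℓ × TreeEdge d ℓ)) := by
      intro p hp q hq hpq
      rw [hM, Finset.coe_filter] at hp hq
      have : c₂ p.2 = c₂ q.2 := by
        rw [← hp.2, ← hq.2, hpq]
      exact Prod.ext hpq (h₂ this)
    calc ∑ q ∈ M, (d ^ (ℓ - q.1.1.length)) ^ 2
        = ∑ e ∈ M.image Prod.fst, (d ^ (ℓ - e.1.length)) ^ 2 :=
          (Finset.sum_image (f := fun e : TreeEdge d ℓ => (d ^ (ℓ - e.1.length)) ^ 2)
            (fun p hp q hq h => hinj hp hq h)).symm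
      _ ≤ S := Finset.sum_le_sum_of_subset (Finset.subset_univ _)
  have hproj2 : ∑ q ∈ M, (d ^ (ℓ - q.2.1.length)) ^ 2 ≤ S := by
    have hinj : Set.InjOn Prod.snd (M : Set (TreeEdge d ℓ × TreeEdge d ℓ)) := by
      intro p hp q hq hpq
      rw [hM, Finset.coe_filter] at hp hq
      have : c₁ p.1 = c₁ q.1 := by
        rw [hp.2, hq.2, hpq]
      exact Prod.ext (h₁ this) hpq
    calc ∑ q ∈ M, (d ^ (ℓ - q.2.1.length)) ^ 2
        = ∑ e ∈ M.image Prod.snd, (d ^ (ℓ - e.1.length)) ^ 2 :=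
          (Finset.sum_image (f := fun e : TreeEdge d ℓ => (d ^ (ℓ - e.1.length)) ^ 2)
            (fun p hp q hq h => hinj hp hq h)).symm
      _ ≤ S := Finset.sum_le_sum_of_subset (Finset.subset_univ _)
  have hBS : 2 * B.card ≤ 2 * S := by
    calc 2 * B.card ≤ 2 * ∑ q ∈ M, d ^ (ℓ - q.1.1.length) * d ^ (ℓ - q.2.1.length) := by
          omega
      _ = ∑ q ∈ M, 2 * (d ^ (ℓ - q.1.1.length) * d ^ (ℓ - q.2.1.length)) := by
          rw [Finset.mul_sum]
      _ ≤ ∑ q ∈ M, ((d ^ (ℓ - q.1.1.length)) ^ 2 + (d ^ (ℓ - q.2.1.length)) ^ 2) :=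
          Finset.sum_le_sum fun q _ => hsq _ _
      _ = (∑ q ∈ M, (d ^ (ℓ - q.1.1.length)) ^ 2) + ∑ q ∈ M, (d ^ (ℓ - q.2.1.length)) ^ 2 :=
          Finset.sum_add_distrib
      _ ≤ 2 * S := by omega
  -- compute S fiberwise
  have hS : S = ∑ i ∈ Finset.Icc 1 ℓ, d ^ i * d ^ (2 * (ℓ - i)) := by
    rw [hSdef, ← Finset.sum_fiberwise_of_maps_to (t := Finset.Icc 1 ℓ)
      (g := fun e : TreeEdge d ℓ => e.1.length)
      (fun e _ => Finset.mem_Icc.mpr ⟨by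
        have := e.2.1
        cases h : e.1 with
        | nil => exact absurd h this
        | cons a l => simp [h], e.2.2⟩)]
    refine Finset.sum_congr rfl fun i hi => ?_
    obtain ⟨hi1, hi2⟩ := Finset.mem_Icc.mp hi
    have : ∀ e ∈ Finset.univ.filter (fun e : TreeEdge d ℓ => e.1.length = i),
        (d ^ (ℓ - e.1.length)) ^ 2 = d ^ (2 * (ℓ - i)) := by
      intro e he
      rw [(Finset.mem_filter.mp he).2, ← pow_mul, mul_comm]
    rw [Finset.sum_congr rfl this, Finset.sum_const, smul_eq_mul]
    congr 1
    rw [← Fintype.card_subtype, card_edge_len i hi1 hi2]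
  have hgeom := geom_bound hd ℓ
  rw [← hS] at hgeom
  -- conclude
  have h4 : d ^ (2 * ℓ) ≤ 4 * mPairs c₁ c₂ := by omega
  rw [ge_iff_le, div_le_iff₀ (by norm_num : (0:ℝ) < 4)]
  calc (d : ℝ) ^ (2 * ℓ) = ((d ^ (2 * ℓ) : ℕ) : ℝ) := by push_cast; ring
    _ ≤ ((4 * mPairs c₁ c₂ : ℕ) : ℝ) := Nat.cast_le.mpr h4
    _ = (mPairs c₁ c₂ : ℝ) * 4 := by push_cast; ring
end

section
/- Let d ≥ 3 and L ≥ 1. Let c₁, c₂ be edge colorings (with colors in a common set) of two disjoint complete d-ary trees with L levels such that within each tree any two distinct edges at distance at most L receive distinct colors. Then m(c₁,c₂) ≥ (1 − L²/d^{⌊L/2⌋} − Σ_{i=1}^{⌊L/2⌋} i/d^{i}) · d^{2L}. -/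
/-- The length of the longest common prefix of two lists. -/
def lcpLen {α : Type*} [DecidableEq α] : List α → List α → ℕ
  | a :: s, b :: t => if a = b then lcpLen s t + 1 else 0
  | _, _ => 0

/-- The distance between two edges `s, t` of the tree (edges being indexed by the sequences
of their lower endpoints): the number of vertices on a shortest path between them. If one of
`s, t` is a prefix of the other it is `| |s| − |t| |`, and otherwise it is
`|s| + |t| − 2a − 1` where `a` is the length of the longest common prefix of `s` and `t`
(so incident edges have distance 1). -/
def edgeDist {α : Type*} [DecidableEq α] (s t : List α) : ℕ :=
  if s <+: t ∨ t <+: s then Nat.dist s.length t.length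
  else s.length + t.length - 2 * lcpLen s t - 1

open Finset

section EdgeDist

variable {α : Type*} [DecidableEq α]

lemma le_lcpLen_of_take_eq {s t : List α} {k : ℕ} (hs : k ≤ s.length) (ht : k ≤ t.length)
    (h : s.take k = t.take k) : k ≤ lcpLen s t := by
  induction s generalizing t k with
  | nil => simp_all
  | cons a s ih =>
    match t, k with
    | _, 0 => exact Nat.zero_le _
    | [], _ + 1 => simp at ht
    | b :: t, k + 1 =>
      obtain ⟨rfl, htake⟩ := List.cons_eq_cons.mp h
      rw [lcpLen, if_pos rfl]
      exact Nat.succ_le_succ (ih (by simpa using hs) (by simpa using ht) htake)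

lemma edgeDist_of_prefix_or_prefix {s t : List α} (h : s <+: t ∨ t <+: s) :
    edgeDist s t = Nat.dist s.length t.length :=
  if_pos h

lemma edgeDist_lt_length_add_length {s t : List α} (hs : s ≠ []) (ht : t ≠ []) :
    edgeDist s t < s.length + t.length := by
  have := List.length_pos_iff.mpr hs
  have := List.length_pos_iff.mpr ht
  unfold edgeDist Nat.dist
  split <;> omega

lemma edgeDist_le_of_take_eq {s t : List α} {j k : ℕ} (hs : s.length = j) (ht : t.length = j)
    (hk : k ≤ j) (hne : s ≠ t) (h : s.take k = t.take k) : edgeDist s t + 2 * k < 2 * j := by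
  have hlcp := le_lcpLen_of_take_eq (hs ▸ hk) (ht ▸ hk) h
  have hkj : k ≠ j := by
    rintro rfl
    rw [List.take_of_length_le hs.le, List.take_of_length_le ht.le] at h
    exact hne h
  have hincomp : ¬(s <+: t ∨ t <+: s) := by
    rintro (hp | hp)
    · exact hne (hp.eq_of_length (by omega))
    · exact hne (hp.eq_of_length (by omega)).symm
  rw [edgeDist, if_neg hincomp]
  omega

end EdgeDist

lemma Set.InjOn.ncard_le_natCard {β γ : Type*} [Finite γ] {s : Set β} {f : β → γ}
    (hf : Set.InjOn f s) : s.ncard ≤ Nat.card γ :=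
  hf.ncard_image ▸ Set.ncard_le_card _

lemma two_mul_sum_mul_le_of_injOn {ι κ R : Type*} [CommSemiring R] [LinearOrder R]
    [IsStrictOrderedRing R] [ExistsAddOfLE R] [DecidableEq ι] [DecidableEq κ]
    {S : Finset (ι × κ)} {X : Finset ι} {Y : Finset κ} (a : ι → R) (b : κ → R)
    (hX : ∀ p ∈ S, p.1 ∈ X) (hY : ∀ p ∈ S, p.2 ∈ Y)
    (hfst : Set.InjOn Prod.fst (S : Set (ι × κ)))
    (hsnd : Set.InjOn Prod.snd (S : Set (ι × κ))) :
    2 * ∑ p ∈ S, a p.1 * b p.2 ≤ ∑ x ∈ X, a x ^ 2 + ∑ y ∈ Y, b y ^ 2 :=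
  calc 2 * ∑ p ∈ S, a p.1 * b p.2
      ≤ ∑ p ∈ S, (a p.1 ^ 2 + b p.2 ^ 2) := by
        rw [mul_sum]
        exact sum_le_sum fun p _ => by rw [← mul_assoc]; exact two_mul_le_add_sq _ _
    _ = ∑ x ∈ S.image Prod.fst, a x ^ 2 + ∑ y ∈ S.image Prod.snd, b y ^ 2 := by
        rw [sum_add_distrib, sum_image hfst, sum_image hsnd]
    _ ≤ ∑ x ∈ X, a x ^ 2 + ∑ y ∈ Y, b y ^ 2 :=
        add_le_add
          (sum_le_sum_of_subset_of_nonneg (image_subset_iff.mpr hX) fun _ _ _ => sq_nonneg _)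
          (sum_le_sum_of_subset_of_nonneg (image_subset_iff.mpr hY) fun _ _ _ => sq_nonneg _)

lemma List.IsPrefix.take_eq_take {α : Type*} {l₁ l₂ : List α} (h : l₁ <+: l₂) {n : ℕ}
    (hn : n ≤ l₁.length) : l₁.take n = l₂.take n := by
  rw [List.prefix_iff_eq_take.mp h, List.take_take, min_eq_left hn]

lemma natCard_vector_fin (d n : ℕ) : Nat.card (List.Vector (Fin d) n) = d ^ n := by
  simp

namespace TreeEdge

variable {d L : ℕ}

lemma length_pos (e : TreeEdge d L) : 0 < e.1.length := List.length_pos_iff.mpr e.2.1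

lemma length_le (e : TreeEdge d L) : e.1.length ≤ L := e.2.2

instance : Finite (TreeEdge d L) :=
  ((List.finite_length_le (Fin d) L).subset fun _ hs => hs.2).to_subtype

noncomputable instance : Fintype (TreeEdge d L) := Fintype.ofFinite _

lemma card_filter_length_eq_le (i : ℕ) : #{e : TreeEdge d L | e.1.length = i} ≤ d ^ i :=
  calc #{e : TreeEdge d L | e.1.length = i}
      = {e : TreeEdge d L | e.1.length = i}.ncard := by simp [← Set.ncard_coe_finset]
    _ ≤ {l : List (Fin d) | l.length = i}.ncard :=
        Set.ncard_le_ncard_of_injOn Subtype.val (fun _ he => he) Subtype.val_injective.injOn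
          (List.finite_length_eq _ _)
    _ = d ^ i := by rw [← Nat.card_coe_set_eq]; exact natCard_vector_fin d i

lemma sum_sq_pow_le (m : ℕ) (hm : m ≤ L) :
    ∑ e : TreeEdge d L with e.1.length ≤ m, (d ^ (L - e.1.length)) ^ 2 ≤
      ∑ i ∈ Icc 1 m, d ^ (2 * L - i) := by
  rw [← sum_fiberwise_of_maps_to (g := fun e : TreeEdge d L => e.1.length) (t := Icc 1 m)
    fun e he => mem_Icc.mpr ⟨e.length_pos, (mem_filter.mp he).2⟩]
  refine sum_le_sum fun i hi => ?_
  have hiL : i ≤ L := (mem_Icc.mp hi).2.trans hm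
  rw [sum_const_nat fun e he => by rw [(mem_filter.mp he).2]]
  calc _ ≤ d ^ i * (d ^ (L - i)) ^ 2 := by
        gcongr
        exact (card_le_card fun e he => by simp_all).trans (card_filter_length_eq_le i)
    _ = d ^ (2 * L - i) := by
        rw [← pow_mul, ← pow_add]
        congr 1
        omega

end TreeEdge

namespace TreeLeaf

variable {d L : ℕ}

instance : Fintype (TreeLeaf d L) := inferInstanceAs (Fintype (List.Vector (Fin d) L))

lemma natCard : Nat.card (TreeLeaf d L) = d ^ L := natCard_vector_fin d L

lemma ncard_setOf_prefix_le (u : List (Fin d)) :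
    {v : TreeLeaf d L | u <+: v.1}.ncard ≤ d ^ (L - u.length) := by
  rw [← natCard_vector_fin]
  refine Set.InjOn.ncard_le_natCard (f := fun v : TreeLeaf d L =>
    (⟨v.1.drop u.length, by simp [v.2]⟩ : List.Vector (Fin d) (L - u.length))) ?_
  intro v hv w hw hvw
  apply Subtype.ext
  rw [← List.prefix_iff_eq_append.mp hv, ← List.prefix_iff_eq_append.mp hw]
  exact congrArg (u ++ ·.1) hvw

end TreeLeaf

def IsDistanceColoring {C : Type*} {d L : ℕ} (c : TreeEdge d L → C) : Prop :=
  ∀ e f : TreeEdge d L, e ≠ f → edgeDist e.1 f.1 ≤ L → c e ≠ c f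

namespace IsDistanceColoring

variable {C : Type*} {d L : ℕ} {c : TreeEdge d L → C}

lemma eq_of_edgeDist_le (hc : IsDistanceColoring c) {e f : TreeEdge d L}
    (hdist : edgeDist e.1 f.1 ≤ L) (hcol : c e = c f) : e = f :=
  not_not.mp fun hne => hc e f hne hdist hcol

lemma injOn_leafPath (hc : IsDistanceColoring c) (v : TreeLeaf d L) :
    Set.InjOn c (leafPath v) := by
  intro e he f hf hcol
  refine hc.eq_of_edgeDist_le ?_ hcol
  rw [edgeDist_of_prefix_or_prefix (List.prefix_or_prefix_of_prefix he hf), Nat.dist]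
  have := e.length_le
  have := f.length_le
  omega

lemma injOn_shallow (hc : IsDistanceColoring c) : Set.InjOn c {e | e.1.length ≤ L / 2} := by
  intro e he f hf hcol
  refine hc.eq_of_edgeDist_le ?_ hcol
  have := edgeDist_lt_length_add_length e.2.1 f.2.1
  simp only [Set.mem_ofPred_eq] at he hf
  omega

lemma eq_of_take_eq (hc : IsDistanceColoring c) {e f : TreeEdge d L}
    (hlen : e.1.length = f.1.length)
    (htake : e.1.take (e.1.length - L / 2) = f.1.take (e.1.length - L / 2))
    (hcol : c e = c f) : e = f := by
  by_contra hne
  have := edgeDist_le_of_take_eq rfl hlen.symm (Nat.sub_le _ _) (fun h => hne (Subtype.ext h))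
    htake
  exact hc e f hne (by omega) hcol

end IsDistanceColoring

section ClashPairs

variable {C : Type*} {d L : ℕ} (c₁ c₂ : TreeEdge d L → C)

def clashPairs (D : Set (ℕ × ℕ)) : Set (TreeLeaf d L × TreeLeaf d L) :=
  {p | ∃ e f : TreeEdge d L, e ∈ leafPath p.1 ∧ f ∈ leafPath p.2 ∧
    (e.1.length, f.1.length) ∈ D ∧ c₁ e = c₂ f}

def deepDepths (L : ℕ) : Finset (ℕ × ℕ) :=
  {q ∈ Icc 1 L ×ˢ Icc 1 L | L / 2 < q.1 ∨ L / 2 < q.2}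

lemma card_deepDepths_le (L : ℕ) : #(deepDepths L) ≤ L ^ 2 := by
  refine (card_filter_le _ _).trans ?_
  simp [sq]

variable {c₁ c₂}

lemma compl_rainbowPairs_subset (h₁ : IsDistanceColoring c₁) (h₂ : IsDistanceColoring c₂) :
    (rainbowPairs c₁ c₂)ᶜ ⊆
      (⋃ q ∈ deepDepths L, clashPairs c₁ c₂ {q}) ∪
        clashPairs c₁ c₂ {q | q.1 ≤ L / 2 ∧ q.2 ≤ L / 2} := by
  intro p hp
  have hclash : ¬Disjoint (c₁ '' leafPath p.1) (c₂ '' leafPath p.2) := fun hdisj =>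
    hp ⟨h₁.injOn_leafPath p.1, h₂.injOn_leafPath p.2, hdisj⟩
  obtain ⟨_, ⟨e, he, rfl⟩, f, hf, hcol⟩ := Set.not_disjoint_iff.mp hclash
  by_cases hshallow : e.1.length ≤ L / 2 ∧ f.1.length ≤ L / 2
  · exact Or.inr ⟨e, f, he, hf, hshallow, hcol.symm⟩
  · refine Or.inl (Set.mem_biUnion (x := (e.1.length, f.1.length)) ?_
      ⟨e, f, he, hf, rfl, hcol.symm⟩)
    have := e.length_pos
    have := e.length_le
    have := f.length_pos
    have := f.length_le
    simp only [deepDepths, coe_filter, mem_product, mem_Icc, Set.mem_ofPred_eq]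
    omega

lemma ncard_clashPairs_swap (D : Set (ℕ × ℕ)) :
    (clashPairs c₁ c₂ D).ncard = (clashPairs c₂ c₁ (Prod.swap '' D)).ncard := by
  rw [← Set.ncard_image_of_injective _ Prod.swap_injective]
  congr 1
  ext ⟨v, w⟩
  simp only [Set.image_swap_eq_preimage_swap, clashPairs, Set.mem_preimage, Set.mem_ofPred_eq,
    Prod.swap_prod_mk]
  constructor <;> rintro ⟨e, f, he, hf, hD, hcol⟩ <;> exact ⟨f, e, hf, he, hD, hcol.symm⟩

/-- Given `v`, a clashing `w` is determined by its first `j - ⌊L/2⌋` and last `L - j` letters,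
because the clashing edge of depth `j` is determined by its colour and its first `j - ⌊L/2⌋`
letters (`IsDistanceColoring.eq_of_take_eq`). -/
lemma ncard_clashPairs_singleton_le (h₂ : IsDistanceColoring c₂) {i j : ℕ} (hj : L / 2 < j)
    (hjL : j ≤ L) : (clashPairs c₁ c₂ {(i, j)}).ncard ≤ d ^ (2 * L - L / 2) := by
  have hcard : Nat.card (TreeLeaf d L × List.Vector (Fin d) (j - L / 2) ×
      List.Vector (Fin d) (L - j)) = d ^ (2 * L - L / 2) := by
    rw [Nat.card_prod, Nat.card_prod, TreeLeaf.natCard, natCard_vector_fin,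
      natCard_vector_fin, ← pow_add, ← pow_add]
    congr 1
    omega
  rw [← hcard]
  refine Set.InjOn.ncard_le_natCard (f := fun p => (p.1,
    (⟨p.2.1.take (j - L / 2), by simp [p.2.2]; omega⟩ : List.Vector (Fin d) (j - L / 2)),
    (⟨p.2.1.drop j, by simp [p.2.2]⟩ : List.Vector (Fin d) (L - j)))) ?_
  rintro ⟨v, w⟩ ⟨e, f, he, hf, hdepth, hcol⟩ ⟨v', w'⟩ ⟨e', f', he', hf', hdepth', hcol'⟩ himg
  simp only [Prod.mk.injEq, Set.mem_singleton_iff] at himg hdepth hdepth'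
  obtain ⟨rfl, himg⟩ := himg
  have htake : w.1.take (j - L / 2) = w'.1.take (j - L / 2) := congrArg (·.1.1) himg
  have hdrop : w.1.drop j = w'.1.drop j := congrArg (·.2.1) himg
  have hfw : f.1 <+: w.1 := hf
  have hfw' : f'.1 <+: w'.1 := hf'
  have hee' : e = e' :=
    Subtype.ext ((List.prefix_of_prefix_length_le he he' (by omega)).eq_of_length (by omega))
  have hff' : f = f' := by
    refine h₂.eq_of_take_eq (by omega) ?_ (by rw [← hcol, ← hcol', hee'])
    rw [hfw.take_eq_take (Nat.sub_le _ _), hfw'.take_eq_take (by omega), hdepth.2, htake]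
  subst hff'
  refine Prod.ext rfl (Subtype.ext ?_)
  rw [← List.prefix_iff_eq_append.mp hfw, ← List.prefix_iff_eq_append.mp hfw', hdepth.2,
    hdrop]

lemma ncard_clashPairs_shallow_le (h₁ : IsDistanceColoring c₁) (h₂ : IsDistanceColoring c₂) :
    (clashPairs c₁ c₂ {q | q.1 ≤ L / 2 ∧ q.2 ≤ L / 2}).ncard ≤
      ∑ i ∈ Icc 1 (L / 2), d ^ (2 * L - i) := by
  classical
  set X : Finset (TreeEdge d L) := {e | e.1.length ≤ L / 2}
  set S : Finset (TreeEdge d L × TreeEdge d L) := {q ∈ X ×ˢ X | c₁ q.1 = c₂ q.2}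
  set a : TreeEdge d L → ℕ := fun e => d ^ (L - e.1.length)
  have hcover : clashPairs c₁ c₂ {q | q.1 ≤ L / 2 ∧ q.2 ≤ L / 2} ⊆
      ⋃ q ∈ S, {v | q.1 ∈ leafPath v} ×ˢ {w | q.2 ∈ leafPath w} := by
    rintro p ⟨e, f, he, hf, ⟨he_depth, hf_depth⟩, hcol⟩
    exact Set.mem_biUnion (x := (e, f)) (by simp [S, X, he_depth, hf_depth, hcol]) ⟨he, hf⟩
  have hX : ∀ q ∈ S, q.1 ∈ X ∧ q.2 ∈ X := fun q hq => mem_product.mp (mem_filter.mp hq).1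
  have hcolS : ∀ q ∈ S, c₁ q.1 = c₂ q.2 := fun q hq => (mem_filter.mp hq).2
  have hshallow : ∀ e ∈ X, e.1.length ≤ L / 2 := fun e he => (mem_filter.mp he).2
  have hfst : Set.InjOn Prod.fst (S : Set (TreeEdge d L × TreeEdge d L)) :=
    fun q hq q' hq' h => Prod.ext h <|
      h₂.injOn_shallow (hshallow _ (hX q hq).2) (hshallow _ (hX q' hq').2)
        (by rw [← hcolS q hq, ← hcolS q' hq', h])
  have hsnd : Set.InjOn Prod.snd (S : Set (TreeEdge d L × TreeEdge d L)) :=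
    fun q hq q' hq' h => Prod.ext (h₁.injOn_shallow (hshallow _ (hX q hq).1)
      (hshallow _ (hX q' hq').1) (by rw [hcolS q hq, hcolS q' hq', h])) h
  have hmatch : 2 * ∑ q ∈ S, a q.1 * a q.2 ≤ ∑ e ∈ X, a e ^ 2 + ∑ e ∈ X, a e ^ 2 :=
    two_mul_sum_mul_le_of_injOn a a (fun q hq => (hX q hq).1) (fun q hq => (hX q hq).2) hfst hsnd
  calc _ ≤ (⋃ q ∈ S, {v | q.1 ∈ leafPath v} ×ˢ {w | q.2 ∈ leafPath w}).ncard :=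
        Set.ncard_le_ncard hcover (Set.toFinite _)
    _ ≤ ∑ q ∈ S, ({v | q.1 ∈ leafPath v} ×ˢ {w | q.2 ∈ leafPath w}).ncard :=
        set_ncard_biUnion_le _ _
    _ ≤ ∑ q ∈ S, a q.1 * a q.2 := sum_le_sum fun q _ => by
        rw [Set.ncard_prod]
        exact Nat.mul_le_mul (TreeLeaf.ncard_setOf_prefix_le _)
          (TreeLeaf.ncard_setOf_prefix_le _)
    _ ≤ ∑ e ∈ X, a e ^ 2 := by omega
    _ ≤ _ := TreeEdge.sum_sq_pow_le _ (Nat.div_le_self _ _)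

lemma ncard_compl_rainbowPairs_le (h₁ : IsDistanceColoring c₁) (h₂ : IsDistanceColoring c₂) :
    (rainbowPairs c₁ c₂)ᶜ.ncard ≤
      L ^ 2 * d ^ (2 * L - L / 2) + ∑ i ∈ Icc 1 (L / 2), d ^ (2 * L - i) := by
  have hdeep : ∀ q ∈ deepDepths L, (clashPairs c₁ c₂ {q}).ncard ≤ d ^ (2 * L - L / 2) := by
    rintro ⟨i, j⟩ hq
    simp only [deepDepths, mem_filter, mem_product, mem_Icc] at hq
    rcases hq.2 with hi | hj
    · rw [ncard_clashPairs_swap, Set.image_singleton, Prod.swap_prod_mk]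
      exact ncard_clashPairs_singleton_le h₁ hi hq.1.1.2
    · exact ncard_clashPairs_singleton_le h₂ hj hq.1.2.2
  calc _ ≤ ((⋃ q ∈ deepDepths L, clashPairs c₁ c₂ {q}) ∪
          clashPairs c₁ c₂ {q | q.1 ≤ L / 2 ∧ q.2 ≤ L / 2}).ncard :=
        Set.ncard_le_ncard (compl_rainbowPairs_subset h₁ h₂) (Set.toFinite _)
    _ ≤ (⋃ q ∈ deepDepths L, clashPairs c₁ c₂ {q}).ncard +
          (clashPairs c₁ c₂ {q | q.1 ≤ L / 2 ∧ q.2 ≤ L / 2}).ncard := Set.ncard_union_le _ _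
    _ ≤ #(deepDepths L) * d ^ (2 * L - L / 2) +
          ∑ i ∈ Icc 1 (L / 2), d ^ (2 * L - i) := by
        gcongr
        · exact (set_ncard_biUnion_le _ _).trans (sum_le_card_nsmul _ _ _ hdeep)
        · exact ncard_clashPairs_shallow_le h₁ h₂
    _ ≤ _ := by gcongr; exact card_deepDepths_le L

variable (c₁ c₂) in
lemma mPairs_add_ncard_compl : mPairs c₁ c₂ + (rainbowPairs c₁ c₂)ᶜ.ncard = d ^ (2 * L) := by
  rw [mPairs, Nat.card_coe_set_eq, Set.ncard_add_ncard_compl, Nat.card_prod,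
    TreeLeaf.natCard, ← pow_add, two_mul]

end ClashPairs

theorem stmt_5_general (d L : ℕ) (hd : 3 ≤ d) {C : Type*}
    (c₁ c₂ : TreeEdge d L → C)
    (h₁ : ∀ e f : TreeEdge d L, e ≠ f → edgeDist e.1 f.1 ≤ L → c₁ e ≠ c₁ f)
    (h₂ : ∀ e f : TreeEdge d L, e ≠ f → edgeDist e.1 f.1 ≤ L → c₂ e ≠ c₂ f) :
    (mPairs c₁ c₂ : ℝ) ≥
      (1 - (L : ℝ) ^ 2 / (d : ℝ) ^ (L / 2)
          - ∑ i ∈ Finset.Icc 1 (L / 2), (i : ℝ) / (d : ℝ) ^ i) * (d : ℝ) ^ (2 * L) := by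
  have hd₀ : (d : ℝ) ≠ 0 := by exact_mod_cast (by omega : d ≠ 0)
  have hscale : ∀ {k : ℕ} (x : ℝ), k ≤ 2 * L →
      x / (d : ℝ) ^ k * (d : ℝ) ^ (2 * L) = x * (d : ℝ) ^ (2 * L - k) := fun x hk => by
    rw [pow_sub₀ _ hd₀ hk]; ring
  have hcompl : ((rainbowPairs c₁ c₂)ᶜ.ncard : ℝ) ≤
      (L : ℝ) ^ 2 * (d : ℝ) ^ (2 * L - L / 2) +
        ∑ i ∈ Icc 1 (L / 2), (d : ℝ) ^ (2 * L - i) := by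
    exact_mod_cast ncard_compl_rainbowPairs_le h₁ h₂
  have htotal : (mPairs c₁ c₂ : ℝ) + (rainbowPairs c₁ c₂)ᶜ.ncard = (d : ℝ) ^ (2 * L) := by
    exact_mod_cast mPairs_add_ncard_compl c₁ c₂
  have hsum : ∑ i ∈ Icc 1 (L / 2), (d : ℝ) ^ (2 * L - i) ≤
      (∑ i ∈ Icc 1 (L / 2), (i : ℝ) / (d : ℝ) ^ i) * (d : ℝ) ^ (2 * L) := by
    rw [sum_mul]
    refine sum_le_sum fun i hi => ?_
    have hi := mem_Icc.mp hi
    rw [hscale _ (by omega)]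
    exact le_mul_of_one_le_left (by positivity) (by exact_mod_cast hi.1)
  rw [ge_iff_le, sub_sub, sub_mul, one_mul, add_mul, hscale _ (by omega)]
  linarith

/-- let `d ≥ 3`, `L ≥ 1`, and let `c₁, c₂` be edge colorings of two disjoint
complete `d`-ary trees with `L` levels such that within each tree any two distinct edges at
distance at most `L` receive distinct colors. Then
`m(c₁,c₂) ≥ (1 − L²/d^⌊L/2⌋ − Σ_{i=1}^{⌊L/2⌋} i/d^i) · d^(2L)`. -/
theorem stmt_5 (d L : ℕ) (hd : 3 ≤ d) (hL : 1 ≤ L) {C : Type*}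
    (c₁ c₂ : TreeEdge d L → C)
    (h₁ : ∀ e f : TreeEdge d L, e ≠ f → edgeDist e.1 f.1 ≤ L → c₁ e ≠ c₁ f)
    (h₂ : ∀ e f : TreeEdge d L, e ≠ f → edgeDist e.1 f.1 ≤ L → c₂ e ≠ c₂ f) :
    (mPairs c₁ c₂ : ℝ) ≥
      (1 - (L : ℝ) ^ 2 / (d : ℝ) ^ (L / 2)
          - ∑ i ∈ Finset.Icc 1 (L / 2), (i : ℝ) / (d : ℝ) ^ i) * (d : ℝ) ^ (2 * L) :=
  stmt_5_general d L hd c₁ c₂ h₁ h₂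
end

section
/- Let d ≥ 3 and L ≥ 1. Let c₁, c₂ be edge colorings (with colors in a common set) of two disjoint complete d-ary trees with L levels such that within each tree any two distinct edges at distance at most L receive distinct colors. Then for every 1 ≤ ℓ ≤ L, the restrictions c₁^ℓ, c₂^ℓ of c₁, c₂ to the edges of depth at most ℓ satisfy m(c₁^ℓ, c₂^ℓ) ≥ (1 − ℓ²/d^{⌊L/2⌋} − Σ_{i=1}^{⌊L/2⌋} i/d^{i}) · d^{2ℓ}. -/
/-- The restriction of a coloring of the tree with `L` levels to the subtree spanned by the
edges of depth at most `ℓ`, for `ℓ ≤ L`. -/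
def restrictColoring {C : Type*} {d ℓ L : ℕ} (h : ℓ ≤ L) (c : TreeEdge d L → C) :
    TreeEdge d ℓ → C :=
  fun e => c ⟨e.1, e.2.1, e.2.2.trans h⟩
namespace Stmt6Aux
variable {α : Type*} [DecidableEq α]

lemma lcpLen_append (u s t : List α) : lcpLen (u ++ s) (u ++ t) = u.length + lcpLen s t := by
  induction u with
  | nil => simp
  | cons a u ih => simp [lcpLen, ih]; omega

lemma le_lcpLen_of_take_eq {s t : List α} {k : ℕ} (hk : k ≤ s.length)
    (h : s.take k = t.take k) : k ≤ lcpLen s t := by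
  have hs := List.take_append_drop k s
  have ht := List.take_append_drop k t
  have heq : lcpLen s t = lcpLen (s.take k ++ s.drop k) (s.take k ++ t.drop k) := by
    rw [h] at hs ⊢
    rw [hs, ht]
  rw [heq, lcpLen_append]
  have : (s.take k).length = k := by
    rw [List.length_take]; omega
  omega

lemma prefix_total {s t v : List α} (h1 : s <+: v) (h2 : t <+: v) : s <+: t ∨ t <+: s := by
  rcases le_total s.length t.length with h | h
  · exact Or.inl (List.prefix_of_prefix_length_le h1 h2 h)
  · exact Or.inr (List.prefix_of_prefix_length_le h2 h1 h)

lemma edgeDist_le_of_len_le {s t : List α} {m : ℕ} (hs : s ≠ [])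
    (h1 : s.length ≤ m) (h2 : t.length ≤ m) : edgeDist s t ≤ 2 * m - 1 := by
  have hs' : 1 ≤ s.length := List.length_pos_iff.mpr hs
  unfold edgeDist
  split
  · simp only [Nat.dist]
    omega
  · omega

lemma edgeDist_le_of_take_eq {s t : List α} (hst : s ≠ t) (hlen : s.length = t.length)
    {k : ℕ} (hk : k ≤ s.length) (h : s.take k = t.take k) :
    edgeDist s t ≤ 2 * (s.length - k) - 1 := by
  rcases Decidable.em (s <+: t ∨ t <+: s) with hpre | hpre
  · exfalso
    rcases hpre with hp | hp
    · exact hst (hp.eq_of_length hlen)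
    · exact hst (hp.eq_of_length hlen.symm).symm
  · rw [edgeDist, if_neg hpre]
    have := le_lcpLen_of_take_eq hk h
    omega

lemma edgeDist_le_max_of_prefix {s t v : List α} (h1 : s <+: v) (h2 : t <+: v) :
    edgeDist s t ≤ v.length := by
  have h3 := prefix_total h1 h2
  have l1 := h1.length_le
  have l2 := h2.length_le
  unfold edgeDist
  rw [if_pos h3]
  simp only [Nat.dist]
  omega



noncomputable instance instFintypeTreeEdge (d ℓ : ℕ) : Fintype (TreeEdge d ℓ) :=
  ((List.finite_length_le (Fin d) ℓ).subset
    (fun s hs => hs.2 : {s : List (Fin d) | s ≠ [] ∧ s.length ≤ ℓ} ⊆ _)).fintype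

noncomputable instance instFintypeTreeLeaf (d ℓ : ℕ) : Fintype (TreeLeaf d ℓ) :=
  (List.finite_length_eq (Fin d) ℓ).fintype

lemma card_treeLeaf (d ℓ : ℕ) : Fintype.card (TreeLeaf d ℓ) = d ^ ℓ := by
  have e : TreeLeaf d ℓ ≃ List.Vector (Fin d) ℓ :=
    ⟨fun x => ⟨x.1, x.2⟩, fun x => ⟨x.1, x.2⟩, fun _ => rfl, fun _ => rfl⟩
  rw [Fintype.card_congr e, card_vector, Fintype.card_fin]

/-- cardinality bound via an injective length-`k` list invariant -/
lemma card_le_pow_of_inj {d : ℕ} {X : Type*} (S : Finset X) (k : ℕ)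
    (g : X → List (Fin d)) (hlen : ∀ x ∈ S, (g x).length = k)
    (hinj : ∀ x ∈ S, ∀ y ∈ S, g x = g y → x = y) : S.card ≤ d ^ k := by
  have h1 : S.card = Fintype.card {x // x ∈ S} := (Fintype.card_coe S).symm
  rw [h1]
  have hf : Function.Injective
      (fun x : {x // x ∈ S} => (⟨g x.1, hlen x.1 x.2⟩ : List.Vector (Fin d) k)) := by
    intro x y hxy
    have h2 : g x.1 = g y.1 := congrArg Subtype.val hxy
    exact Subtype.ext (hinj x.1 x.2 y.1 y.2 h2)
  calc Fintype.card {x // x ∈ S} ≤ Fintype.card (List.Vector (Fin d) k) :=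
        Fintype.card_le_of_injective _ hf
    _ = d ^ k := by rw [card_vector, Fintype.card_fin]

/-- grouping a sum by a ℕ-valued "depth" -/
lemma sum_le_of_fiber_card {X : Type*} (S : Finset X) (dep : X → ℕ) (lo hi : ℕ)
    (hdep : ∀ x ∈ S, dep x ∈ Finset.Icc lo hi) (F : ℕ → ℕ)
    (hcard : ∀ a ∈ Finset.Icc lo hi, (S.filter (fun x => dep x = a)).card ≤ F a)
    (g : ℕ → ℕ) : ∑ x ∈ S, g (dep x) ≤ ∑ a ∈ Finset.Icc lo hi, F a * g a := by
  classical
  rw [← Finset.sum_fiberwise_of_maps_to hdep (fun x => g (dep x))]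
  apply Finset.sum_le_sum
  intro a ha
  calc ∑ x ∈ S.filter (fun x => dep x = a), g (dep x)
      = ∑ x ∈ S.filter (fun x => dep x = a), g a := by
        apply Finset.sum_congr rfl
        intro x hx
        rw [(Finset.mem_filter.mp hx).2]
    _ = (S.filter (fun x => dep x = a)).card * g a := by
        rw [Finset.sum_const, smul_eq_mul]
    _ ≤ F a * g a := Nat.mul_le_mul_right _ (hcard a ha)

/-- sum over a set with injective projection bounded by sum over a superset of the image -/
lemma sum_proj_le {X Z : Type*} [DecidableEq Z] (S : Finset X) (π : X → Z)
    (hinj : ∀ p ∈ S, ∀ q ∈ S, π p = π q → p = q)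
    (T : Finset Z) (hsub : ∀ p ∈ S, π p ∈ T) (g : Z → ℕ) :
    ∑ p ∈ S, g (π p) ≤ ∑ x ∈ T, g x := by
  rw [← Finset.sum_image hinj]
  apply Finset.sum_le_sum_of_subset
  intro x hx
  rcases Finset.mem_image.mp hx with ⟨p, hp, rfl⟩
  exact hsub p hp



lemma arith (D : ℝ) (hD : 3 ≤ D) (ℓ L F m' : ℕ) (hℓ1 : 1 ≤ ℓ) (hℓL : ℓ ≤ L)
    (hF : F = L / 2) (hm' : m' = (L + 1) / 2) :
    (∑ i ∈ Finset.Icc 1 (min ℓ m'), 1 / D ^ i)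
      + 2 * (ℓ : ℝ) * ((ℓ - m' : ℕ) : ℝ) * (1 / D ^ m')
    ≤ (ℓ : ℝ) ^ 2 * (1 / D ^ F) + ∑ i ∈ Finset.Icc 1 F, (i : ℝ) / D ^ i := by
  have hD0 : (0:ℝ) < D := by linarith
  have hD1 : (1:ℝ) ≤ D := by linarith
  have hℓR : (1:ℝ) ≤ (ℓ:ℝ) := by exact_mod_cast hℓ1
  have hsq : (1:ℝ) ≤ (ℓ:ℝ)^2 := by nlinarith
  have hsum : ∀ n, n ≤ F → (∑ i ∈ Finset.Icc 1 n, 1 / D ^ i)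
      ≤ ∑ i ∈ Finset.Icc 1 F, (i:ℝ) / D ^ i := by
    intro n hn
    calc ∑ i ∈ Finset.Icc 1 n, 1/D^i ≤ ∑ i ∈ Finset.Icc 1 n, (i:ℝ)/D^i := by
          apply Finset.sum_le_sum
          intro i hi
          have h1 : (1:ℝ) ≤ (i:ℝ) := by exact_mod_cast (Finset.mem_Icc.mp hi).1
          gcongr
      _ ≤ ∑ i ∈ Finset.Icc 1 F, (i:ℝ)/D^i := by
          apply Finset.sum_le_sum_of_subset_of_nonneg (Finset.Icc_subset_Icc_right hn)
          intro i _ _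
          positivity
  rcases le_or_gt ℓ m' with hcase | hcase
  · have hz : ((ℓ - m' : ℕ) : ℝ) = 0 := by
      have : ℓ - m' = 0 := by omega
      rw [this]; norm_num
    rw [hz, min_eq_left hcase]
    rcases le_or_gt ℓ F with h2 | h2
    · have h3 := hsum ℓ h2
      have h4 : (0:ℝ) ≤ (ℓ:ℝ)^2 * (1/D^F) := by positivity
      linarith
    · have hℓF : ℓ = F + 1 := by omega
      subst hℓF
      rw [Finset.sum_Icc_succ_top (by omega : 1 ≤ F + 1)]
      have h3 := hsum F le_rfl
      have h4 : 1 / D ^ (F+1) ≤ ((F+1:ℕ):ℝ)^2 * (1/D^F) := by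
        have h5 : 1/D^(F+1) ≤ 1/D^F := by
          apply one_div_le_one_div_of_le (by positivity)
          exact pow_le_pow_right₀ hD1 (Nat.le_succ F)
        calc 1/D^(F+1) ≤ 1/D^F := h5
          _ ≤ ((F+1:ℕ):ℝ)^2 * (1/D^F) := le_mul_of_one_le_left (by positivity) hsq
      linarith
  · rw [min_eq_right hcase.le]
    rcases (by omega : m' = F ∨ m' = F + 1) with he | he
    · subst he
      have hnat : 2 * ℓ * (ℓ - m') ≤ ℓ ^ 2 := by
        have h6 : 2 * (ℓ - m') ≤ ℓ := by omega
        calc 2 * ℓ * (ℓ - m') = ℓ * (2 * (ℓ - m')) := by ring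
          _ ≤ ℓ * ℓ := Nat.mul_le_mul_left _ h6
          _ = ℓ ^ 2 := (sq ℓ).symm
      have hreal : 2 * (ℓ:ℝ) * ((ℓ - m' : ℕ):ℝ) ≤ (ℓ:ℝ)^2 := by
        have := (Nat.cast_le (α := ℝ)).mpr hnat
        push_cast at this
        linarith
      have h7 : 2 * (ℓ:ℝ) * ((ℓ - m' : ℕ):ℝ) * (1/D^m') ≤ (ℓ:ℝ)^2 * (1/D^m') := by
        apply mul_le_mul_of_nonneg_right hreal
        positivity
      have h8 := hsum m' le_rfl
      linarith
    · subst he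
      rw [Finset.sum_Icc_succ_top (by omega : 1 ≤ F + 1)]
      have h8 := hsum F le_rfl
      have hkey : 1 / D ^ (F+1) + 2 * (ℓ:ℝ) * ((ℓ - (F+1) : ℕ):ℝ) * (1/D^(F+1))
          ≤ (ℓ:ℝ)^2 * (1/D^F) := by
        have hnat : 1 + 2 * ℓ * (ℓ - (F+1)) ≤ 3 * ℓ ^ 2 := by
          have h6 : ℓ - (F+1) ≤ ℓ := Nat.sub_le _ _
          have h7 : ℓ * (ℓ - (F+1)) ≤ ℓ * ℓ := Nat.mul_le_mul_left _ h6
          have h9 : 1 ≤ ℓ * ℓ := Nat.one_le_iff_ne_zero.mpr (by positivity)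
          have h10 : 2 * ℓ * (ℓ - (F+1)) = 2 * (ℓ * (ℓ - (F+1))) := by ring
          have h11 : 3 * ℓ ^ 2 = ℓ * ℓ + 2 * (ℓ * ℓ) := by ring
          omega
        have hreal : 1 + 2 * (ℓ:ℝ) * ((ℓ - (F+1) : ℕ):ℝ) ≤ 3 * (ℓ:ℝ)^2 := by
          have := (Nat.cast_le (α := ℝ)).mpr hnat
          push_cast at this
          linarith
        have hden : 3 * D ^ F ≤ D ^ (F+1) := by
          rw [pow_succ]
          calc 3 * D ^ F = D ^ F * 3 := by ring
            _ ≤ D ^ F * D := by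
              apply mul_le_mul_of_nonneg_left hD
              positivity
        have := div_le_div₀ (by positivity : (0:ℝ) ≤ 3 * (ℓ:ℝ)^2) hreal
          (by positivity : (0:ℝ) < 3 * D ^ F) hden
        calc 1 / D ^ (F+1) + 2 * (ℓ:ℝ) * ((ℓ - (F+1) : ℕ):ℝ) * (1/D^(F+1))
            = (1 + 2 * (ℓ:ℝ) * ((ℓ - (F+1) : ℕ):ℝ)) / D^(F+1) := by ring
          _ ≤ (3 * (ℓ:ℝ)^2) / (3 * D ^ F) := this
          _ = (ℓ:ℝ)^2 * (1/D^F) := by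
              field_simp
      linarith



end Stmt6Aux
namespace Stmt6Aux

open Finset

variable {C : Type*} {d ℓ L : ℕ}

lemma injOn_path (hℓL : ℓ ≤ L) (c : TreeEdge d L → C)
    (h : ∀ e f : TreeEdge d L, e ≠ f → edgeDist e.1 f.1 ≤ L → c e ≠ c f)
    (v : TreeLeaf d ℓ) : Set.InjOn (restrictColoring hℓL c) (leafPath v) := by
  intro e he f hf hcc
  by_contra hne
  have hne' : (⟨e.1, e.2.1, e.2.2.trans hℓL⟩ : TreeEdge d L)
      ≠ ⟨f.1, f.2.1, f.2.2.trans hℓL⟩ := by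
    intro hEq
    exact hne (Subtype.ext (congrArg (fun z : TreeEdge d L => z.1) hEq))
  refine h _ _ hne' ?_ hcc
  calc edgeDist e.1 f.1 ≤ v.1.length := edgeDist_le_max_of_prefix he hf
    _ ≤ L := by rw [v.2]; exact hℓL

lemma shallow_unique (hℓL : ℓ ≤ L) (c : TreeEdge d L → C)
    (h : ∀ e f : TreeEdge d L, e ≠ f → edgeDist e.1 f.1 ≤ L → c e ≠ c f)
    (e f : TreeEdge d ℓ) (he : e.1.length ≤ (L + 1) / 2) (hf : f.1.length ≤ (L + 1) / 2)
    (hc : restrictColoring hℓL c e = restrictColoring hℓL c f) : e = f := by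
  by_contra hne
  have hne' : (⟨e.1, e.2.1, e.2.2.trans hℓL⟩ : TreeEdge d L)
      ≠ ⟨f.1, f.2.1, f.2.2.trans hℓL⟩ := by
    intro hEq
    exact hne (Subtype.ext (congrArg (fun z : TreeEdge d L => z.1) hEq))
  refine h _ _ hne' ?_ hc
  calc edgeDist e.1 f.1 ≤ 2 * ((L + 1) / 2) - 1 := edgeDist_le_of_len_le e.2.1 he hf
    _ ≤ L := by omega

lemma card_class (hℓL : ℓ ≤ L) (c : TreeEdge d L → C)
    (h : ∀ e f : TreeEdge d L, e ≠ f → edgeDist e.1 f.1 ≤ L → c e ≠ c f)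
    (x : C) (a : ℕ) [DecidablePred fun e : TreeEdge d ℓ =>
      e.1.length = a ∧ restrictColoring hℓL c e = x] :
    (Finset.univ.filter fun e : TreeEdge d ℓ =>
      e.1.length = a ∧ restrictColoring hℓL c e = x).card ≤ d ^ (a - (L + 1) / 2) := by
  apply card_le_pow_of_inj _ _ (fun e => e.1.take (a - (L + 1) / 2))
  · intro e he
    have hlen := (Finset.mem_filter.mp he).2.1
    rw [List.length_take, hlen]
    omega
  · intro e he f hf htake
    obtain ⟨-, hle, hce⟩ := Finset.mem_filter.mp he
    obtain ⟨-, hlf, hcf⟩ := Finset.mem_filter.mp hf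
    by_contra hne
    have hne1 : e.1 ≠ f.1 := fun hEq => hne (Subtype.ext hEq)
    have hlenf : e.1.length = f.1.length := by rw [hle, hlf]
    have hdist := edgeDist_le_of_take_eq hne1 hlenf
      (by rw [hle]; omega : a - (L + 1) / 2 ≤ e.1.length) htake
    rw [hle] at hdist
    have hne' : (⟨e.1, e.2.1, e.2.2.trans hℓL⟩ : TreeEdge d L)
        ≠ ⟨f.1, f.2.1, f.2.2.trans hℓL⟩ := by
      intro hEq
      exact hne (Subtype.ext (congrArg (fun z : TreeEdge d L => z.1) hEq))
    refine h _ _ hne' ?_ (by rw [show c _ = restrictColoring hℓL c e from rfl, hce,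
      show c _ = restrictColoring hℓL c f from rfl, hcf])
    calc edgeDist e.1 f.1 ≤ 2 * (a - (a - (L + 1) / 2)) - 1 := hdist
      _ ≤ 2 * ((L + 1) / 2) - 1 := by omega
      _ ≤ L := by omega

lemma card_depth (a : ℕ) [DecidablePred fun e : TreeEdge d ℓ => e.1.length = a] :
    (Finset.univ.filter fun e : TreeEdge d ℓ => e.1.length = a).card ≤ d ^ a := by
  apply card_le_pow_of_inj _ _ (fun e => e.1)
  · intro e he
    exact (Finset.mem_filter.mp he).2
  · intro e _ f _ hEq
    exact Subtype.ext hEq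

lemma card_above (e : TreeEdge d ℓ) [DecidablePred fun v : TreeLeaf d ℓ => e.1 <+: v.1] :
    (Finset.univ.filter fun v : TreeLeaf d ℓ => e.1 <+: v.1).card ≤ d ^ (ℓ - e.1.length) := by
  apply card_le_pow_of_inj _ _ (fun v => v.1.drop e.1.length)
  · intro v _
    rw [List.length_drop, v.2]
  · intro v hv w hw hdrop
    have hv' := (Finset.mem_filter.mp hv).2
    have hw' := (Finset.mem_filter.mp hw).2
    apply Subtype.ext
    have h1 : v.1 = e.1 ++ v.1.drop e.1.length := by
      conv_lhs => rw [← List.take_append_drop e.1.length v.1]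
      congr 1
      exact (List.prefix_iff_eq_take.mp hv').symm
    have h2 : w.1 = e.1 ++ w.1.drop e.1.length := by
      conv_lhs => rw [← List.take_append_drop e.1.length w.1]
      congr 1
      exact (List.prefix_iff_eq_take.mp hw').symm
    rw [h1, h2, hdrop]

lemma sum_above_le : ∑ f : TreeEdge d ℓ, d ^ (ℓ - f.1.length) ≤ ℓ * d ^ ℓ := by
  classical
  have h1 := sum_le_of_fiber_card (Finset.univ : Finset (TreeEdge d ℓ))
    (fun e => e.1.length) 1 ℓ
    (fun e _ => Finset.mem_Icc.mpr ⟨List.length_pos_iff.mpr e.2.1, e.2.2⟩)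
    (fun a => d ^ a) (fun a _ => card_depth a) (fun a => d ^ (ℓ - a))
  refine le_trans h1 ?_
  calc ∑ a ∈ Finset.Icc 1 ℓ, d ^ a * d ^ (ℓ - a)
      ≤ ∑ _a ∈ Finset.Icc 1 ℓ, d ^ ℓ := by
        apply Finset.sum_le_sum
        intro a ha
        have ha' := Finset.mem_Icc.mp ha
        apply le_of_eq
        rw [← pow_add]
        congr 1
        omega
    _ = ℓ * d ^ ℓ := by
        rw [Finset.sum_const, Nat.card_Icc, smul_eq_mul]
        congr 1 <;> omega

end Stmt6Aux
namespace Stmt6Aux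

lemma deep_sum {C : Type*} {d ℓ : ℕ} (m' : ℕ) (γ₁ γ₂ : TreeEdge d ℓ → C)
    (hclass : ∀ (x : C) (a : ℕ),
      ∀ (_ : DecidablePred fun e : TreeEdge d ℓ => e.1.length = a ∧ γ₁ e = x),
      (Finset.univ.filter fun e : TreeEdge d ℓ => e.1.length = a ∧ γ₁ e = x).card
        ≤ d ^ (a - m'))
    [DecidablePred fun q : TreeEdge d ℓ × TreeEdge d ℓ =>
      γ₁ q.1 = γ₂ q.2 ∧ ¬ q.1.1.length ≤ m'] :
    ∑ q ∈ Finset.univ.filter (fun q : TreeEdge d ℓ × TreeEdge d ℓ =>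
        γ₁ q.1 = γ₂ q.2 ∧ ¬ q.1.1.length ≤ m'),
      d ^ (ℓ - q.1.1.length) * d ^ (ℓ - q.2.1.length)
      ≤ ((ℓ - m') * d ^ (ℓ - m')) * (ℓ * d ^ ℓ) := by
  classical
  rw [Finset.filter_congr_decidable]
  set S := Finset.univ.filter (fun q : TreeEdge d ℓ × TreeEdge d ℓ =>
      γ₁ q.1 = γ₂ q.2 ∧ ¬ q.1.1.length ≤ m') with hS
  rw [← Finset.sum_fiberwise_of_maps_to (t := (Finset.univ : Finset (TreeEdge d ℓ)))
    (g := fun q => q.2) (fun q _ => Finset.mem_univ _)]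
  have hinner : ∀ f : TreeEdge d ℓ,
      ∑ q ∈ S.filter (fun q => q.2 = f), d ^ (ℓ - q.1.1.length) * d ^ (ℓ - q.2.1.length)
      ≤ ((ℓ - m') * d ^ (ℓ - m')) * d ^ (ℓ - f.1.length) := by
    intro f
    have hcongr : ∀ q ∈ S.filter (fun q => q.2 = f),
        d ^ (ℓ - q.1.1.length) * d ^ (ℓ - q.2.1.length)
        = d ^ (ℓ - q.1.1.length) * d ^ (ℓ - f.1.length) := by
      intro q hq
      rw [(Finset.mem_filter.mp hq).2]
    rw [Finset.sum_congr rfl hcongr, ← Finset.sum_mul]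
    apply Nat.mul_le_mul_right
    -- project to the first coordinate
    have hproj := sum_proj_le (S.filter (fun q => q.2 = f)) (fun q => q.1)
      (by
        intro p hp q hq hpq
        have hp2 := (Finset.mem_filter.mp hp).2
        have hq2 := (Finset.mem_filter.mp hq).2
        exact Prod.ext hpq (hp2.trans hq2.symm))
      (Finset.univ.filter (fun e : TreeEdge d ℓ => ¬ e.1.length ≤ m' ∧ γ₁ e = γ₂ f))
      (by
        intro p hp
        obtain ⟨hpS, hp2⟩ := Finset.mem_filter.mp hp
        obtain ⟨-, hcol, hlen⟩ := Finset.mem_filter.mp hpS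
        exact Finset.mem_filter.mpr ⟨Finset.mem_univ _, hlen, by rw [hcol, hp2]⟩)
      (fun e => d ^ (ℓ - e.1.length))
    refine le_trans hproj ?_
    have hfiber := sum_le_of_fiber_card
      (Finset.univ.filter (fun e : TreeEdge d ℓ => ¬ e.1.length ≤ m' ∧ γ₁ e = γ₂ f))
      (fun e => e.1.length) (m' + 1) ℓ
      (by
        intro e he
        obtain ⟨-, hlen, -⟩ := Finset.mem_filter.mp he
        refine Finset.mem_Icc.mpr ⟨?_, e.2.2⟩
        show m' + 1 ≤ e.1.length
        omega)
      (fun a => d ^ (a - m'))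
      (by
        intro a _
        refine le_trans (Finset.card_le_card ?_) (hclass (γ₂ f) a inferInstance)
        intro e he
        obtain ⟨he1, he2⟩ := Finset.mem_filter.mp he
        obtain ⟨-, -, hcol⟩ := Finset.mem_filter.mp he1
        exact Finset.mem_filter.mpr ⟨Finset.mem_univ _, he2, hcol⟩)
      (fun a => d ^ (ℓ - a))
    refine le_trans hfiber ?_
    calc ∑ a ∈ Finset.Icc (m' + 1) ℓ, d ^ (a - m') * d ^ (ℓ - a)
        ≤ ∑ _a ∈ Finset.Icc (m' + 1) ℓ, d ^ (ℓ - m') := by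
          apply Finset.sum_le_sum
          intro a ha
          have ha' := Finset.mem_Icc.mp ha
          apply le_of_eq
          rw [← pow_add]
          congr 1
          omega
      _ = (ℓ - m') * d ^ (ℓ - m') := by
          rw [Finset.sum_const, Nat.card_Icc, smul_eq_mul]
          congr 1 <;> omega
  calc ∑ f : TreeEdge d ℓ, ∑ q ∈ S.filter (fun q => q.2 = f),
        d ^ (ℓ - q.1.1.length) * d ^ (ℓ - q.2.1.length)
      ≤ ∑ f : TreeEdge d ℓ, ((ℓ - m') * d ^ (ℓ - m')) * d ^ (ℓ - f.1.length) :=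
        Finset.sum_le_sum (fun f _ => hinner f)
    _ = ((ℓ - m') * d ^ (ℓ - m')) * ∑ f : TreeEdge d ℓ, d ^ (ℓ - f.1.length) := by
        rw [Finset.mul_sum]
    _ ≤ ((ℓ - m') * d ^ (ℓ - m')) * (ℓ * d ^ ℓ) :=
        Nat.mul_le_mul_left _ sum_above_le

lemma shallow_sum {C : Type*} {d ℓ : ℕ} (m' M : ℕ) (hM : M = min ℓ m')
    (γ₁ γ₂ : TreeEdge d ℓ → C)
    (huniq₁ : ∀ e f : TreeEdge d ℓ, e.1.length ≤ m' → f.1.length ≤ m' → γ₁ e = γ₁ f → e = f)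
    (huniq₂ : ∀ e f : TreeEdge d ℓ, e.1.length ≤ m' → f.1.length ≤ m' → γ₂ e = γ₂ f → e = f)
    [DecidablePred fun q : TreeEdge d ℓ × TreeEdge d ℓ =>
      γ₁ q.1 = γ₂ q.2 ∧ (q.1.1.length ≤ m' ∧ q.2.1.length ≤ m')] :
    ∑ q ∈ Finset.univ.filter (fun q : TreeEdge d ℓ × TreeEdge d ℓ =>
        γ₁ q.1 = γ₂ q.2 ∧ (q.1.1.length ≤ m' ∧ q.2.1.length ≤ m')),
      d ^ (ℓ - q.1.1.length) * d ^ (ℓ - q.2.1.length)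
      ≤ ∑ i ∈ Finset.Icc 1 M, d ^ i * (d ^ (ℓ - i) * d ^ (ℓ - i)) := by
  classical
  rw [Finset.filter_congr_decidable]
  set S := Finset.univ.filter (fun q : TreeEdge d ℓ × TreeEdge d ℓ =>
      γ₁ q.1 = γ₂ q.2 ∧ (q.1.1.length ≤ m' ∧ q.2.1.length ≤ m')) with hS
  -- a bound on sums over shallow edges of one tree
  have hedge : ∀ g : ℕ → ℕ,
      ∑ e ∈ Finset.univ.filter (fun e : TreeEdge d ℓ => e.1.length ≤ m'), g e.1.length
      ≤ ∑ i ∈ Finset.Icc 1 M, d ^ i * g i := by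
    intro g
    apply sum_le_of_fiber_card _ _ 1 M
    · intro e he
      have := (Finset.mem_filter.mp he).2
      have h1 := List.length_pos_iff.mpr e.2.1
      have h2 := e.2.2
      exact Finset.mem_Icc.mpr ⟨h1, by omega⟩
    · intro a _
      refine le_trans (Finset.card_le_card ?_) (card_depth a)
      intro e he
      exact Finset.mem_filter.mpr ⟨Finset.mem_univ _, (Finset.mem_filter.mp he).2⟩
  -- the matching is injective in each coordinate
  have hinj1 : ∀ p ∈ S, ∀ q ∈ S, p.1 = q.1 → p = q := by
    intro p hp q hq hpq
    obtain ⟨-, hpc, hp1, hp2⟩ := Finset.mem_filter.mp hp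
    obtain ⟨-, hqc, hq1, hq2⟩ := Finset.mem_filter.mp hq
    refine Prod.ext hpq (huniq₂ _ _ hp2 hq2 ?_)
    rw [← hpc, ← hqc, hpq]
  have hinj2 : ∀ p ∈ S, ∀ q ∈ S, p.2 = q.2 → p = q := by
    intro p hp q hq hpq
    obtain ⟨-, hpc, hp1, hp2⟩ := Finset.mem_filter.mp hp
    obtain ⟨-, hqc, hq1, hq2⟩ := Finset.mem_filter.mp hq
    refine Prod.ext (huniq₁ _ _ hp1 hq1 ?_) hpq
    rw [hpc, hqc, hpq]
  have hA : ∑ q ∈ S, d ^ (ℓ - q.1.1.length) * d ^ (ℓ - q.1.1.length)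
      ≤ ∑ i ∈ Finset.Icc 1 M, d ^ i * (d ^ (ℓ - i) * d ^ (ℓ - i)) := by
    refine le_trans (sum_proj_le S (fun q => q.1) hinj1
      (Finset.univ.filter (fun e : TreeEdge d ℓ => e.1.length ≤ m'))
      (fun p hp => Finset.mem_filter.mpr ⟨Finset.mem_univ _,
        (Finset.mem_filter.mp hp).2.2.1⟩)
      (fun e => d ^ (ℓ - e.1.length) * d ^ (ℓ - e.1.length))) ?_
    exact hedge (fun a => d ^ (ℓ - a) * d ^ (ℓ - a))
  have hB : ∑ q ∈ S, d ^ (ℓ - q.2.1.length) * d ^ (ℓ - q.2.1.length)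
      ≤ ∑ i ∈ Finset.Icc 1 M, d ^ i * (d ^ (ℓ - i) * d ^ (ℓ - i)) := by
    refine le_trans (sum_proj_le S (fun q => q.2) hinj2
      (Finset.univ.filter (fun e : TreeEdge d ℓ => e.1.length ≤ m'))
      (fun p hp => Finset.mem_filter.mpr ⟨Finset.mem_univ _,
        (Finset.mem_filter.mp hp).2.2.2⟩)
      (fun e => d ^ (ℓ - e.1.length) * d ^ (ℓ - e.1.length))) ?_
    exact hedge (fun a => d ^ (ℓ - a) * d ^ (ℓ - a))
  apply Nat.le_of_mul_le_mul_left _ (show 0 < 2 by norm_num)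
  calc 2 * ∑ q ∈ S, d ^ (ℓ - q.1.1.length) * d ^ (ℓ - q.2.1.length)
      = ∑ q ∈ S, 2 * (d ^ (ℓ - q.1.1.length) * d ^ (ℓ - q.2.1.length)) := Finset.mul_sum _ _ _
    _ ≤ ∑ q ∈ S, (d ^ (ℓ - q.1.1.length) * d ^ (ℓ - q.1.1.length)
          + d ^ (ℓ - q.2.1.length) * d ^ (ℓ - q.2.1.length)) := by
        apply Finset.sum_le_sum
        intro q _
        have h := two_mul_le_add_sq (d ^ (ℓ - q.1.1.length)) (d ^ (ℓ - q.2.1.length))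
        calc 2 * (d ^ (ℓ - q.1.1.length) * d ^ (ℓ - q.2.1.length))
            = 2 * d ^ (ℓ - q.1.1.length) * d ^ (ℓ - q.2.1.length) := by ring
          _ ≤ (d ^ (ℓ - q.1.1.length)) ^ 2 + (d ^ (ℓ - q.2.1.length)) ^ 2 := h
          _ = d ^ (ℓ - q.1.1.length) * d ^ (ℓ - q.1.1.length)
              + d ^ (ℓ - q.2.1.length) * d ^ (ℓ - q.2.1.length) := by ring
    _ = (∑ q ∈ S, d ^ (ℓ - q.1.1.length) * d ^ (ℓ - q.1.1.length))
        + ∑ q ∈ S, d ^ (ℓ - q.2.1.length) * d ^ (ℓ - q.2.1.length) := Finset.sum_add_distrib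
    _ ≤ (∑ i ∈ Finset.Icc 1 M, d ^ i * (d ^ (ℓ - i) * d ^ (ℓ - i)))
        + ∑ i ∈ Finset.Icc 1 M, d ^ i * (d ^ (ℓ - i) * d ^ (ℓ - i)) := add_le_add hA hB
    _ = 2 * ∑ i ∈ Finset.Icc 1 M, d ^ i * (d ^ (ℓ - i) * d ^ (ℓ - i)) := (two_mul _).symm

end Stmt6Aux
/-- main theorem. -/
theorem stmt_6 (d L : ℕ) (hd : 3 ≤ d) (hL : 1 ≤ L) {C : Type*}
    (c₁ c₂ : TreeEdge d L → C)
    (h₁ : ∀ e f : TreeEdge d L, e ≠ f → edgeDist e.1 f.1 ≤ L → c₁ e ≠ c₁ f)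
    (h₂ : ∀ e f : TreeEdge d L, e ≠ f → edgeDist e.1 f.1 ≤ L → c₂ e ≠ c₂ f)
    (ℓ : ℕ) (hℓ1 : 1 ≤ ℓ) (hℓL : ℓ ≤ L) :
    (mPairs (restrictColoring hℓL c₁) (restrictColoring hℓL c₂) : ℝ) ≥
      (1 - (ℓ : ℝ) ^ 2 / (d : ℝ) ^ (L / 2)
          - ∑ i ∈ Finset.Icc 1 (L / 2), (i : ℝ) / (d : ℝ) ^ i) * (d : ℝ) ^ (2 * ℓ) := by
  classical
  set c₁' := restrictColoring hℓL c₁ with hc1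
  set c₂' := restrictColoring hℓL c₂ with hc2
  set m' : ℕ := (L + 1) / 2 with hm'
  set M : ℕ := min ℓ m' with hM
  set w : TreeEdge d ℓ × TreeEdge d ℓ → ℕ :=
    fun q => d ^ (ℓ - q.1.1.length) * d ^ (ℓ - q.2.1.length) with hw
  set Coll : Finset (TreeEdge d ℓ × TreeEdge d ℓ) :=
    Finset.univ.filter (fun q => c₁' q.1 = c₂' q.2) with hColl
  set bad : Finset (TreeLeaf d ℓ × TreeLeaf d ℓ) :=
    Finset.univ.filter
      (fun p => ¬ Disjoint (c₁' '' leafPath p.1) (c₂' '' leafPath p.2)) with hbad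
  -- Step 1 : total count
  have htotal : d ^ (2 * ℓ) ≤ mPairs c₁' c₂' + bad.card := by
    have hcov : (Finset.univ : Finset (TreeLeaf d ℓ × TreeLeaf d ℓ)) ⊆
        (rainbowPairs c₁' c₂').toFinset ∪ bad := by
      intro p _
      by_cases hdisj : Disjoint (c₁' '' leafPath p.1) (c₂' '' leafPath p.2)
      · apply Finset.mem_union_left
        rw [Set.mem_toFinset]
        exact ⟨Stmt6Aux.injOn_path hℓL c₁ h₁ p.1, Stmt6Aux.injOn_path hℓL c₂ h₂ p.2, hdisj⟩
      · exact Finset.mem_union_right _ (Finset.mem_filter.mpr ⟨Finset.mem_univ _, hdisj⟩)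
    have hmp : mPairs c₁' c₂' = (rainbowPairs c₁' c₂').toFinset.card := by
      rw [mPairs, Nat.card_coe_set_eq, Set.ncard_eq_toFinset_card']
    calc d ^ (2 * ℓ) = Fintype.card (TreeLeaf d ℓ × TreeLeaf d ℓ) := by
          rw [Fintype.card_prod, Stmt6Aux.card_treeLeaf]
          ring
      _ = (Finset.univ : Finset (TreeLeaf d ℓ × TreeLeaf d ℓ)).card := Finset.card_univ.symm
      _ ≤ ((rainbowPairs c₁' c₂').toFinset ∪ bad).card := Finset.card_le_card hcov
      _ ≤ (rainbowPairs c₁' c₂').toFinset.card + bad.card := Finset.card_union_le _ _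
      _ = mPairs c₁' c₂' + bad.card := by rw [hmp]
  -- Step 2 : union bound over collisions
  have hbadle : bad.card ≤ ∑ q ∈ Coll, w q := by
    have hsub : bad ⊆ Coll.biUnion (fun q =>
        (Finset.univ.filter fun v : TreeLeaf d ℓ => q.1.1 <+: v.1) ×ˢ
        (Finset.univ.filter fun v : TreeLeaf d ℓ => q.2.1 <+: v.1)) := by
      intro p hp
      have hnd := (Finset.mem_filter.mp hp).2
      rcases Set.not_disjoint_iff.mp hnd with ⟨x, hx1, hx2⟩
      rcases hx1 with ⟨e, he, hex⟩
      rcases hx2 with ⟨f, hf, hfx⟩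
      refine Finset.mem_biUnion.mpr ⟨(e, f),
        Finset.mem_filter.mpr ⟨Finset.mem_univ _, by rw [hex, hfx]⟩, ?_⟩
      exact Finset.mem_product.mpr ⟨Finset.mem_filter.mpr ⟨Finset.mem_univ _, he⟩,
        Finset.mem_filter.mpr ⟨Finset.mem_univ _, hf⟩⟩
    calc bad.card ≤ (Coll.biUnion _).card := Finset.card_le_card hsub
      _ ≤ ∑ q ∈ Coll,
          ((Finset.univ.filter fun v : TreeLeaf d ℓ => q.1.1 <+: v.1) ×ˢ
           (Finset.univ.filter fun v : TreeLeaf d ℓ => q.2.1 <+: v.1)).card :=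
          Finset.card_biUnion_le
      _ ≤ ∑ q ∈ Coll, w q := Finset.sum_le_sum (fun q _ => by
          rw [Finset.card_product]
          exact Nat.mul_le_mul (Stmt6Aux.card_above q.1) (Stmt6Aux.card_above q.2))
  -- Step 3 : split into shallow and deep parts
  have hsplit : ∑ q ∈ Coll, w q ≤
      ∑ q ∈ Coll.filter (fun q => q.1.1.length ≤ m' ∧ q.2.1.length ≤ m'), w q
      + (∑ q ∈ Coll.filter (fun q => ¬ q.1.1.length ≤ m'), w q
        + ∑ q ∈ Coll.filter (fun q => ¬ q.2.1.length ≤ m'), w q) := by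
    rw [← Finset.sum_filter_add_sum_filter_not Coll (fun q => q.1.1.length ≤ m') w]
    have h1 : ∑ q ∈ Coll.filter (fun q => q.1.1.length ≤ m'), w q
        = ∑ q ∈ (Coll.filter (fun q => q.1.1.length ≤ m')).filter
            (fun q => q.2.1.length ≤ m'), w q
        + ∑ q ∈ (Coll.filter (fun q => q.1.1.length ≤ m')).filter
            (fun q => ¬ q.2.1.length ≤ m'), w q :=
      (Finset.sum_filter_add_sum_filter_not _ _ _).symm
    have h2 : ∑ q ∈ (Coll.filter (fun q => q.1.1.length ≤ m')).filter
          (fun q => ¬ q.2.1.length ≤ m'), w q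
        ≤ ∑ q ∈ Coll.filter (fun q => ¬ q.2.1.length ≤ m'), w q :=
      Finset.sum_le_sum_of_subset (Finset.filter_subset_filter _ (Finset.filter_subset _ _))
    have h3 : (Coll.filter (fun q => q.1.1.length ≤ m')).filter
          (fun q => q.2.1.length ≤ m')
        = Coll.filter (fun q => q.1.1.length ≤ m' ∧ q.2.1.length ≤ m') :=
      Finset.filter_filter _ _ _
    rw [h1, h3]
    omega
  -- Step 4a : shallow bound
  have hShallow : ∑ q ∈ Coll.filter (fun q => q.1.1.length ≤ m' ∧ q.2.1.length ≤ m'), w q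
      ≤ ∑ i ∈ Finset.Icc 1 M, d ^ i * (d ^ (ℓ - i) * d ^ (ℓ - i)) := by
    have huniq₁ : ∀ e f : TreeEdge d ℓ, e.1.length ≤ m' → f.1.length ≤ m' →
        c₁' e = c₁' f → e = f :=
      fun e f he hf hc => Stmt6Aux.shallow_unique hℓL c₁ h₁ e f he hf hc
    have huniq₂ : ∀ e f : TreeEdge d ℓ, e.1.length ≤ m' → f.1.length ≤ m' →
        c₂' e = c₂' f → e = f :=
      fun e f he hf hc => Stmt6Aux.shallow_unique hℓL c₂ h₂ e f he hf hc
    have hss := Stmt6Aux.shallow_sum m' M hM c₁' c₂' huniq₁ huniq₂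
    rw [hColl, Finset.filter_filter]
    exact hss
  -- Step 4b : deep bounds
  have hD1 : ∑ q ∈ Coll.filter (fun q => ¬ q.1.1.length ≤ m'), w q
      ≤ ((ℓ - m') * d ^ (ℓ - m')) * (ℓ * d ^ ℓ) := by
    have hds := Stmt6Aux.deep_sum m' c₁' c₂'
      (fun x a _ => Stmt6Aux.card_class hℓL c₁ h₁ x a)
    rw [hColl, Finset.filter_filter]
    exact hds
  have hD2 : ∑ q ∈ Coll.filter (fun q => ¬ q.2.1.length ≤ m'), w q
      ≤ ((ℓ - m') * d ^ (ℓ - m')) * (ℓ * d ^ ℓ) := by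
    have hds := Stmt6Aux.deep_sum m' c₂' c₁'
      (fun x a _ => Stmt6Aux.card_class hℓL c₂ h₂ x a)
    rw [hColl, Finset.filter_filter]
    have hswap : ∑ q ∈ Finset.univ.filter
          (fun q : TreeEdge d ℓ × TreeEdge d ℓ => c₁' q.1 = c₂' q.2 ∧ ¬ q.2.1.length ≤ m'),
          w q
        = ∑ q ∈ Finset.univ.filter
          (fun q : TreeEdge d ℓ × TreeEdge d ℓ => c₂' q.1 = c₁' q.2 ∧ ¬ q.1.1.length ≤ m'),
          d ^ (ℓ - q.2.1.length) * d ^ (ℓ - q.1.1.length) := by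
      apply Finset.sum_equiv (Equiv.prodComm (TreeEdge d ℓ) (TreeEdge d ℓ))
      · intro q
        simp only [Finset.mem_filter, Finset.mem_univ, true_and, Equiv.prodComm_apply,
          Prod.fst_swap, Prod.snd_swap]
        tauto
      · intro q _
        rfl
    rw [hswap]
    refine le_trans (le_of_eq (Finset.sum_congr rfl (fun q _ => Nat.mul_comm _ _))) hds
  -- Step 5 : put the natural-number bounds together
  have hbound : bad.card ≤ (∑ i ∈ Finset.Icc 1 M, d ^ i * (d ^ (ℓ - i) * d ^ (ℓ - i)))
      + 2 * (((ℓ - m') * d ^ (ℓ - m')) * (ℓ * d ^ ℓ)) := by omega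
  -- Step 6 : pass to the reals
  set D : ℝ := (d : ℝ) with hD
  have hD3 : (3 : ℝ) ≤ D := by rw [hD]; exact_mod_cast hd
  have hD0 : (0 : ℝ) < D := by linarith
  have hDpow : ∀ n : ℕ, (0:ℝ) < D ^ n := fun n => pow_pos hD0 n
  have hhelp : ∀ i n : ℕ, i ≤ n → (1 / D ^ i) * D ^ n = D ^ (n - i) := by
    intro i n hin
    rw [pow_sub₀ D (ne_of_gt hD0) hin]
    field_simp
  have hreal1 : D ^ (2 * ℓ) ≤ (mPairs c₁' c₂' : ℝ) + (bad.card : ℝ) := by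
    rw [hD]
    exact_mod_cast htotal
  have hreal2 : (bad.card : ℝ) ≤
      (∑ i ∈ Finset.Icc 1 M, 1 / D ^ i
        + 2 * (ℓ:ℝ) * ((ℓ - m' : ℕ) : ℝ) * (1 / D ^ m')) * D ^ (2 * ℓ) := by
    have hcast : (bad.card : ℝ) ≤
        ((∑ i ∈ Finset.Icc 1 M, d ^ i * (d ^ (ℓ - i) * d ^ (ℓ - i))
          + 2 * (((ℓ - m') * d ^ (ℓ - m')) * (ℓ * d ^ ℓ)) : ℕ) : ℝ) := by
      exact_mod_cast hbound
    refine le_trans hcast (le_of_eq ?_)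
    push_cast
    have e1 : ∀ i ∈ Finset.Icc 1 M, (D ^ i * (D ^ (ℓ - i) * D ^ (ℓ - i)) : ℝ)
        = (1 / D ^ i) * D ^ (2 * ℓ) := by
      intro i hi
      have hi' := Finset.mem_Icc.mp hi
      have hiℓ : i ≤ ℓ := le_trans hi'.2 (by omega)
      rw [hhelp i (2 * ℓ) (by omega), ← pow_add, ← pow_add]
      congr 1
      omega
    rw [Finset.sum_congr rfl e1, ← Finset.sum_mul, add_mul]
    congr 1
    by_cases hcase : m' ≤ ℓ
    · have e2 : D ^ (ℓ - m') * D ^ ℓ = (1 / D ^ m') * D ^ (2 * ℓ) := by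
        rw [hhelp m' (2 * ℓ) (by omega), ← pow_add]
        congr 1
        omega
      calc 2 * (((ℓ - m' : ℕ) : ℝ) * D ^ (ℓ - m') * ((ℓ:ℝ) * D ^ ℓ))
          = 2 * (ℓ:ℝ) * ((ℓ - m' : ℕ) : ℝ) * (D ^ (ℓ - m') * D ^ ℓ) := by ring
        _ = 2 * (ℓ:ℝ) * ((ℓ - m' : ℕ) : ℝ) * ((1 / D ^ m') * D ^ (2 * ℓ)) := by rw [e2]
        _ = 2 * (ℓ:ℝ) * ((ℓ - m' : ℕ) : ℝ) * (1 / D ^ m') * D ^ (2 * ℓ) := by ring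
    · have hz : ℓ - m' = 0 := by omega
      rw [hz]
      norm_num
  -- Step 7 : the arithmetic estimate
  have harith := Stmt6Aux.arith D hD3 ℓ L (L / 2) m' hℓ1 hℓL rfl hm'
  rw [← hM] at harith
  have hmul : (∑ i ∈ Finset.Icc 1 M, 1 / D ^ i
        + 2 * (ℓ:ℝ) * ((ℓ - m' : ℕ) : ℝ) * (1 / D ^ m')) * D ^ (2 * ℓ)
      ≤ ((ℓ:ℝ) ^ 2 * (1 / D ^ (L / 2))
        + ∑ i ∈ Finset.Icc 1 (L / 2), (i:ℝ) / D ^ i) * D ^ (2 * ℓ) := by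
    apply mul_le_mul_of_nonneg_right _ (le_of_lt (hDpow (2 * ℓ)))
    linarith
  have hfin : (1 - (ℓ : ℝ) ^ 2 / D ^ (L / 2)
      - ∑ i ∈ Finset.Icc 1 (L / 2), (i : ℝ) / D ^ i) * D ^ (2 * ℓ)
      = D ^ (2 * ℓ) - ((ℓ:ℝ) ^ 2 * (1 / D ^ (L / 2))
        + ∑ i ∈ Finset.Icc 1 (L / 2), (i:ℝ) / D ^ i) * D ^ (2 * ℓ) := by
    ring
  rw [ge_iff_le, hfin]
  linarith
end

section
/- Let Δ and q be integers with Δ ≥ 1 and q ≥ 8Δ. Then (1/(q−Δ)) · ((q−Δ)/(q−Δ−1))^{Δ} ≤ 2/q. -/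
/-- for integers `Δ ≥ 1` and `q ≥ 8Δ`,
`(1/(q−Δ)) · ((q−Δ)/(q−Δ−1))^Δ ≤ 2/q`. (This shows that in a greedy proper coloring with
`q` colors of a graph of maximum degree `Δ`, the conditional probability that a given edge
receives any particular color, given the colors of all other edges, is at most `2/q`.) -/
theorem stmt_14 (Δ q : ℕ) (hΔ : 1 ≤ Δ) (hq : 8 * Δ ≤ q) :
    1 / ((q : ℝ) - (Δ : ℝ)) * (((q : ℝ) - (Δ : ℝ)) / ((q : ℝ) - (Δ : ℝ) - 1)) ^ Δ
      ≤ 2 / (q : ℝ) := by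
  set x : ℝ := (q : ℝ) - (Δ : ℝ) with hxdef
  have hΔ1 : (1 : ℝ) ≤ (Δ : ℝ) := by exact_mod_cast hΔ
  have hq8 : 8 * (Δ : ℝ) ≤ (q : ℝ) := by exact_mod_cast hq
  have hx7 : 7 * (Δ : ℝ) ≤ x := by simp only [hxdef]; linarith
  have hx : (7 : ℝ) ≤ x := by linarith
  have hx1 : (6 : ℝ) ≤ x - 1 := by linarith
  have hxd : (5 : ℝ) ≤ x - 1 - (Δ : ℝ) := by linarith
  have hx1pos : (0 : ℝ) < x - 1 := by linarith
  have hxpos : (0 : ℝ) < x := by linarith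
  have hqpos : (0 : ℝ) < (q : ℝ) := by linarith
  -- Bernoulli: 1 - Δ/(x-1) ≤ (1 - 1/(x-1))^Δ
  have hb : 1 - (Δ : ℝ) / (x - 1) ≤ (1 - 1 / (x - 1)) ^ Δ := by
    have hge : (-2 : ℝ) ≤ -(1 / (x - 1)) := by
      have : (1 : ℝ) / (x - 1) ≤ 1 := by
        rw [div_le_one hx1pos]; linarith
      linarith
    have h := one_add_mul_le_pow hge Δ
    have e1 : (1 : ℝ) + -(1 / (x - 1)) = 1 - 1 / (x - 1) := by ring
    have e2 : (1 : ℝ) + (Δ : ℝ) * -(1 / (x - 1)) = 1 - (Δ : ℝ) / (x - 1) := by ring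
    rw [e1, e2] at h
    exact h
  have hP0 : (0 : ℝ) ≤ (x / (x - 1)) ^ Δ := by positivity
  have hmul : (x / (x - 1)) ^ Δ * (1 - 1 / (x - 1)) ^ Δ ≤ 1 := by
    rw [← mul_pow]
    apply pow_le_one₀
    · have h0 : x / (x - 1) * (1 - 1 / (x - 1)) = x * (x - 2) / (x - 1) ^ 2 := by
        field_simp; ring
      rw [h0]
      apply div_nonneg (by nlinarith) (by positivity)
    · have : x / (x - 1) * (1 - 1 / (x - 1)) = x * (x - 2) / (x - 1) ^ 2 := by
        field_simp; ring
      rw [this, div_le_one (by positivity)]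
      nlinarith
  -- hence P * (1 - Δ/(x-1)) ≤ 1
  have hkey : (x / (x - 1)) ^ Δ * (1 - (Δ : ℝ) / (x - 1)) ≤ 1 := by
    calc (x / (x - 1)) ^ Δ * (1 - (Δ : ℝ) / (x - 1))
        ≤ (x / (x - 1)) ^ Δ * (1 - 1 / (x - 1)) ^ Δ := by
          exact mul_le_mul_of_nonneg_left hb hP0
      _ ≤ 1 := hmul
  -- so P ≤ (x-1)/(x-1-Δ)
  have hfrac : (0 : ℝ) < 1 - (Δ : ℝ) / (x - 1) := by
    rw [sub_pos, div_lt_one hx1pos]; linarith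
  have hP : (x / (x - 1)) ^ Δ ≤ (x - 1) / (x - 1 - (Δ : ℝ)) := by
    rw [le_div_iff₀ (by linarith)]
    have h1 : (x - 1 - (Δ : ℝ)) = (1 - (Δ : ℝ) / (x - 1)) * (x - 1) := by
      field_simp
    rw [h1, ← mul_assoc]
    calc (x / (x - 1)) ^ Δ * (1 - (Δ : ℝ) / (x - 1)) * (x - 1)
        ≤ 1 * (x - 1) := by
          apply mul_le_mul_of_nonneg_right hkey (le_of_lt hx1pos)
      _ = x - 1 := by ring
  have hqx : (q : ℝ) = x + (Δ : ℝ) := by simp [hxdef]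
  calc 1 / x * (x / (x - 1)) ^ Δ
      ≤ 1 / x * ((x - 1) / (x - 1 - (Δ : ℝ))) := by
        apply mul_le_mul_of_nonneg_left hP (by positivity)
    _ ≤ 2 / (q : ℝ) := by
        have h2 : 1 / x * ((x - 1) / (x - 1 - (Δ : ℝ)))
            = (x - 1) / (x * (x - 1 - (Δ : ℝ))) := by
          field_simp
        rw [h2, div_le_div_iff₀ (by positivity) hqpos, hqx]
        nlinarith [hx7, hΔ1, hxpos]
end
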